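/- arXiv:2409.06252 — 2 statements merged into one kernel-verified Lean document; each statement's English description precedes it below -/
import Mathlib

section
/- Assume G_r contains the edge (1,r), m = min{j - i : (i,j) ∈ E(G_r)} ≥ 2, and let U be an independent set of G_n of size at most m - 2. Then for all n ≥ 3r, the complement of the induced subgraph G_n \ N[U] is connected. -/
/-- `(k,l)` lies in the triangle `Δ((i,j), n-r)` for some edge `(i,j) ∈ E` of `G_r`,
i.e. `0 ≤ k - i ≤ l - j ≤ n - r` (written additively). -/
def triRel (E : Set (ℕ × ℕ)) (r n k l : ℕ) : Prop :=
  ∃ q ∈ E, q.1 ≤ k ∧ k + q.2 ≤ l + q.1 ∧ l + r ≤ n + q.2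

/-- The graph `G_n` of the invariant chain determined by the edge set `E` of `G_r`:
`(k,l)` with `k < l` is an edge of `G_n` iff `(k,l) ∈ Δ((i,j), n-r)` for some `(i,j) ∈ E`. -/
def chainGraph (E : Set (ℕ × ℕ)) (r n : ℕ) : SimpleGraph ℕ :=
  SimpleGraph.fromRel (triRel E r n)

/-- `E` is a set of edges `(i,j)` of a graph `G_r` on `{1,…,r}` with `i < j`. -/
def goodEdges (E : Set (ℕ × ℕ)) (r : ℕ) : Prop :=
  ∀ q ∈ E, 1 ≤ q.1 ∧ q.1 < q.2 ∧ q.2 ≤ r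


/-!
Let `S = [1,n] \ N[U]`. It suffices that `S` is nonempty and that consecutive elements `a < b`
of `S` are not adjacent in `G_n`. Edges of `G_n` join vertices at distance `≥ m`, the edge `(1,r)`
makes any two vertices at distance `≥ r - 1` adjacent, and on the central range
`[r - m, n - r + m + 1]` the graph `G_n` is exactly the graph "distance `≥ m`". If `a` and `b` were
adjacent, the `≥ m - 1` vertices strictly between them would all lie in `N[U]`. Since
`|U| ≤ m - 2`, depending on whether `a` lies below and `b` above the central range one finds
`m - 1` consecutive vertices between `a` and `b` none of which outside `U` can have a neighbour in
`U`; one of them then lies in `S`, a contradiction. The same window argument shows `S ≠ ∅`.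
-/

theorem SimpleGraph.induce_connected_of_adj_consecutive {H : SimpleGraph ℕ} {S : Set ℕ}
    (hS : S.Nonempty)
    (hadj : ∀ a ∈ S, ∀ b ∈ S, a < b → (∀ c ∈ S, ¬ (a < c ∧ c < b)) → H.Adj a b) :
    (H.induce S).Connected := by
  have reach : ∀ d a b (ha : a ∈ S) (hb : b ∈ S), b = a + d →
      (H.induce S).Reachable ⟨a, ha⟩ ⟨b, hb⟩ := by
    intro d
    induction d using Nat.strong_induction_on with
    | _ d ih =>
      intro a b ha hb hd
      by_cases hmid : ∃ c ∈ S, a < c ∧ c < b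
      · obtain ⟨c, hc, hac, hcb⟩ := hmid
        exact (ih (c - a) (by omega) a c ha hc (by omega)).trans
          (ih (b - c) (by omega) c b hc hb (by omega))
      · push Not at hmid
        rcases Nat.eq_zero_or_pos d with rfl | hd0
        · subst hd; rfl
        · exact SimpleGraph.Adj.reachable
            (hadj a ha b hb (by omega) fun c hc h => (hmid c hc h.1).not_gt h.2)
  rw [SimpleGraph.connected_iff]
  refine ⟨?_, hS.to_subtype⟩
  rintro ⟨a, ha⟩ ⟨b, hb⟩
  rcases le_total a b with hab | hab
  · exact reach (b - a) a b ha hb (by omega)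
  · exact (reach (a - b) b a hb ha (by omega)).symm

theorem Finset.exists_notMem_Icc_of_card_add_le (U : Finset ℕ) {lo hi : ℕ}
    (h : U.card + lo ≤ hi) : ∃ x, lo ≤ x ∧ x ≤ hi ∧ x ∉ U := by
  obtain ⟨x, hx, hxU⟩ := exists_mem_notMem_of_card_lt_card (s := U) (t := Finset.Icc lo hi)
    (by rw [Nat.card_Icc]; omega)
  exact ⟨x, (Finset.mem_Icc.mp hx).1, (Finset.mem_Icc.mp hx).2, hxU⟩

section

variable {E : Set (ℕ × ℕ)} {r m n a b c x : ℕ} {U : Finset ℕ}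

def outsideClosedNbhd (E : Set (ℕ × ℕ)) (r n : ℕ) (U : Finset ℕ) : Set ℕ :=
  Set.Icc 1 n \ {w | ∃ u ∈ U, w = u ∨ (chainGraph E r n).Adj u w}

theorem mem_outsideClosedNbhd :
    x ∈ outsideClosedNbhd E r n U ↔
      x ∈ Set.Icc 1 n ∧ x ∉ U ∧ ∀ u ∈ U, ¬ triRel E r n u x ∧ ¬ triRel E r n x u := by
  simp only [outsideClosedNbhd, chainGraph, Set.mem_sdiff, Set.mem_ofPred_eq,
    SimpleGraph.fromRel_adj, not_exists, not_and, not_or]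
  constructor
  · rintro ⟨hx, h⟩
    exact ⟨hx, fun hxU => (h x hxU).1 rfl, fun u hu => (h u hu).2 fun hux => (h u hu).1 hux.symm⟩
  · rintro ⟨hx, hxU, h⟩
    refine ⟨hx, fun u hu => ⟨fun hxu => hxU (hxu ▸ hu), fun _ => h u hu⟩⟩

theorem exists_triRel_of_notMem_outsideClosedNbhd (hx : x ∈ Set.Icc 1 n)
    (hxU : x ∉ U) (hxS : x ∉ outsideClosedNbhd E r n U) :
    ∃ u ∈ U, triRel E r n u x ∨ triRel E r n x u := by
  by_contra! h
  exact hxS (mem_outsideClosedNbhd.mpr ⟨hx, hxU, h⟩)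

theorem add_le_of_triRel (hm : ∀ q ∈ E, q.1 + m ≤ q.2) (h : triRel E r n a b) : a + m ≤ b := by
  obtain ⟨q, hq, -, hab, -⟩ := h
  have := hm q hq
  omega

theorem chainGraph_adj_of_triRel (hE : goodEdges E r) (h : triRel E r n a b) :
    (chainGraph E r n).Adj a b := by
  obtain ⟨q, hq, _, hab, _⟩ := h
  have := hE q hq
  exact (SimpleGraph.fromRel_adj _ a b).mpr ⟨by omega, Or.inl ⟨q, hq, by omega⟩⟩

theorem add_two_le_of_not_triRel (h1r : (1, r) ∈ E) (ha : 1 ≤ a) (hb : b ≤ n)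
    (h : ¬ triRel E r n a b) : b + 2 ≤ a + r := by
  by_contra hab
  exact h ⟨(1, r), h1r, ha, by omega, by omega⟩

theorem triRel_of_central (hE : goodEdges E r) (hattain : ∃ q ∈ E, q.2 = q.1 + m)
    (ha : r ≤ a + m) (hab : a + m ≤ b) (hb : b + r ≤ n + m + 1) : triRel E r n a b := by
  obtain ⟨q, hq, hqm⟩ := hattain
  have := hE q hq
  exact ⟨q, hq, by omega, by omega, by omega⟩

theorem triRel.mono_right (hE : goodEdges E r) (hm : ∀ q ∈ E, q.1 + m ≤ q.2)
    (h : triRel E r n a b) (hbc : b ≤ c) (hc : c + r ≤ n + m + 1) : triRel E r n a c := by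
  obtain ⟨q, hq, h1, h2, -⟩ := h
  have := hE q hq
  have := hm q hq
  exact ⟨q, hq, h1, by omega, by omega⟩

theorem triRel.anti_left (hE : goodEdges E r) (hm : ∀ q ∈ E, q.1 + m ≤ q.2)
    (h : triRel E r n a b) (hca : c ≤ a) (hc : r ≤ c + m) : triRel E r n c b := by
  obtain ⟨q, hq, -, h2, h3⟩ := h
  have := hE q hq
  have := hm q hq
  exact ⟨q, hq, by omega, by omega, h3⟩

theorem exists_mem_outsideClosedNbhd_Icc (hm : ∀ q ∈ E, q.1 + m ≤ q.2) (hm2 : 2 ≤ m)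
    (hcard : U.card ≤ m - 2) {lo hi : ℕ} (hlo : 1 ≤ lo) (hhi : hi ≤ n)
    (hwin : lo + m ≤ hi + 2) (hU : ∀ u ∈ U, lo ≤ u ∧ u ≤ hi)
    (hdiam : ∀ u ∈ U, ∀ v ∈ U, v < u + m) :
    ∃ x, lo ≤ x ∧ x ≤ hi ∧ x ∈ outsideClosedNbhd E r n U := by
  rcases U.eq_empty_or_nonempty with rfl | hne
  · exact ⟨lo, le_rfl, by omega, mem_outsideClosedNbhd.mpr ⟨⟨hlo, by omega⟩, by simp, by simp⟩⟩
  obtain ⟨p, hpU, hpmin⟩ : ∃ p ∈ U, ∀ u ∈ U, p ≤ u :=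
    ⟨U.min' hne, U.min'_mem hne, fun u hu => U.min'_le u hu⟩
  obtain ⟨t, htU, htmax⟩ : ∃ t ∈ U, ∀ u ∈ U, u ≤ t :=
    ⟨U.max' hne, U.max'_mem hne, fun u hu => U.le_max' u hu⟩
  have hp := hU p hpU
  have ht := hU t htU
  have hpt := hdiam p hpU t htU
  -- every point of this window is closer than `m` to all of `U`, so no edge reaches it from `U`
  obtain ⟨x, hx1, hx2, hxU⟩ :=
    U.exists_notMem_Icc_of_card_add_le (lo := max lo (t + 1 - m)) (hi := min hi (p + m - 1))
      (by omega)
  refine ⟨x, by omega, by omega, mem_outsideClosedNbhd.mpr ⟨⟨by omega, by omega⟩, hxU, ?_⟩⟩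
  intro u hu
  have := hpmin u hu
  have := htmax u hu
  exact ⟨fun h => by have := add_le_of_triRel hm h; omega,
    fun h => by have := add_le_of_triRel hm h; omega⟩

theorem outsideClosedNbhd_nonempty (hE : goodEdges E r) (h1r : (1, r) ∈ E)
    (hm : ∀ q ∈ E, q.1 + m ≤ q.2) (hattain : ∃ q ∈ E, q.2 = q.1 + m) (hm2 : 2 ≤ m)
    (hn : 3 * r ≤ n) (hUsub : ↑U ⊆ Set.Icc 1 n)
    (hind : ∀ u ∈ U, ∀ v ∈ U, ¬ (chainGraph E r n).Adj u v) (hcard : U.card ≤ m - 2) :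
    (outsideClosedNbhd E r n U).Nonempty := by
  have h1rm := hm _ h1r
  have hUI : ∀ u ∈ U, 1 ≤ u ∧ u ≤ n := fun u hu => hUsub hu
  have hnot : ∀ u ∈ U, ∀ v ∈ U, ¬ triRel E r n u v :=
    fun u hu v hv h => hind u hu v hv (chainGraph_adj_of_triRel hE h)
  by_cases hdiam : ∀ u ∈ U, ∀ v ∈ U, v < u + m
  · obtain ⟨x, -, -, hx⟩ :=
      exists_mem_outsideClosedNbhd_Icc hm hm2 hcard le_rfl le_rfl (by omega) hUI hdiam
    exact ⟨x, hx⟩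
  push Not at hdiam
  obtain ⟨u, hu, v, hv, huv⟩ := hdiam
  by_contra hS
  have heaten : ∀ x, 1 ≤ x → x ≤ n → x ∉ U → ∃ w ∈ U, triRel E r n w x ∨ triRel E r n x w :=
    fun x h1 h2 hxU =>
      exists_triRel_of_notMem_outsideClosedNbhd ⟨h1, h2⟩ hxU fun hx => hS ⟨x, hx⟩
  have hextreme : u + m < r ∨ n + m + 1 < v + r := by
    by_contra! h
    exact hnot u hu v hv (triRel_of_central hE hattain h.1 huv h.2)
  rcases hextreme with hu_low | hv_high
  · obtain ⟨t, htU, htmax⟩ : ∃ t ∈ U, ∀ w ∈ U, w ≤ t :=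
      ⟨U.max' ⟨u, hu⟩, U.max'_mem _, fun w hw => U.le_max' w hw⟩
    have ht := add_two_le_of_not_triRel h1r (hUI u hu).1 (hUI t htU).2 (hnot u hu t htU)
    have := htmax v hv
    obtain ⟨x, hx1, hx2, hxU⟩ :=
      U.exists_notMem_Icc_of_card_add_le (lo := t + 1 - m) (hi := t) (by omega)
    obtain ⟨w, hw, hwx | hxw⟩ := heaten x (by omega) (by omega) hxU
    · exact hnot w hw t htU (hwx.mono_right hE hm hx2 (by omega))
    · have := add_le_of_triRel hm hxw
      have := htmax w hw
      omega
  · obtain ⟨p, hpU, hpmin⟩ : ∃ p ∈ U, ∀ w ∈ U, p ≤ w :=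
      ⟨U.min' ⟨v, hv⟩, U.min'_mem _, fun w hw => U.min'_le w hw⟩
    have hp := add_two_le_of_not_triRel h1r (hUI p hpU).1 (hUI v hv).2 (hnot p hpU v hv)
    have := hpmin u hu
    have := hUI v hv
    obtain ⟨x, hx1, hx2, hxU⟩ :=
      U.exists_notMem_Icc_of_card_add_le (lo := p) (hi := p + m - 1) (by omega)
    obtain ⟨w, hw, hwx | hxw⟩ := heaten x (by omega) (by omega) hxU
    · have := add_le_of_triRel hm hwx
      have := hpmin w hw
      omega
    · exact hnot p hpU w hw (hxw.anti_left hE hm hx1 (by omega))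

theorem not_triRel_of_consecutive (hE : goodEdges E r) (h1r : (1, r) ∈ E)
    (hm : ∀ q ∈ E, q.1 + m ≤ q.2) (hattain : ∃ q ∈ E, q.2 = q.1 + m) (hm2 : 2 ≤ m)
    (hn : 3 * r ≤ n) (hUsub : ↑U ⊆ Set.Icc 1 n)
    (hind : ∀ u ∈ U, ∀ v ∈ U, ¬ (chainGraph E r n).Adj u v) (hcard : U.card ≤ m - 2)
    (ha : a ∈ outsideClosedNbhd E r n U) (hb : b ∈ outsideClosedNbhd E r n U)
    (hno : ∀ c ∈ outsideClosedNbhd E r n U, ¬ (a < c ∧ c < b)) : ¬ triRel E r n a b := by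
  intro hab
  have hgap := add_le_of_triRel hm hab
  have h1rm := hm _ h1r
  have hUI : ∀ u ∈ U, 1 ≤ u ∧ u ≤ n := fun u hu => hUsub hu
  obtain ⟨⟨ha1, han⟩, -, ha⟩ := mem_outsideClosedNbhd.mp ha
  obtain ⟨⟨hb1, hbn⟩, -, hb⟩ := mem_outsideClosedNbhd.mp hb
  have heaten : ∀ x, a < x → x < b → x ∉ U → ∃ u ∈ U, triRel E r n u x ∨ triRel E r n x u :=
    fun x hax hxb hxU => exists_triRel_of_notMem_outsideClosedNbhd ⟨by omega, by omega⟩ hxU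
      fun hx => hno x hx ⟨hax, hxb⟩
  have hnear : ∀ u ∈ U, u + 2 ≤ a + r ∧ b + 2 ≤ u + r := fun u hu =>
    ⟨add_two_le_of_not_triRel h1r ha1 (hUI u hu).2 (ha u hu).2,
      add_two_le_of_not_triRel h1r (hUI u hu).1 hbn (hb u hu).1⟩
  -- a vertex of `(a, b)` adjacent to `u ∈ U` from above forces `a + m < r`, from below
  -- `n + m + 1 < b + r`: otherwise `a`, resp. `b`, would be adjacent to `u` as well
  by_cases ha_low : a + m < r <;> by_cases hb_high : n + m + 1 < b + r
  · have hdiam : ∀ u ∈ U, ∀ v ∈ U, v < u + m := by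
      intro u hu v hv
      by_contra! huv
      have := hnear u hu
      have := hnear v hv
      exact hind u hu v hv
        (chainGraph_adj_of_triRel hE (triRel_of_central hE hattain (by omega) huv (by omega)))
    obtain ⟨x, hax, hxb, hx⟩ := exists_mem_outsideClosedNbhd_Icc (E := E) (r := r) (n := n)
      (lo := a + 1) (hi := b - 1) hm hm2 hcard (by omega) (by omega) (by omega)
      (fun u hu => by have := hnear u hu; omega) hdiam
    exact hno x hx ⟨by omega, by omega⟩
  · obtain ⟨x, hx1, hx2, hxU⟩ :=
      U.exists_notMem_Icc_of_card_add_le (lo := b + 1 - m) (hi := b - 1) (by omega)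
    obtain ⟨u, hu, hux | hxu⟩ := heaten x (by omega) (by omega) hxU
    · exact (hb u hu).1 (hux.mono_right hE hm (by omega) (by omega))
    · have := add_le_of_triRel hm hxu
      have := hnear u hu
      exact (ha u hu).2 (hab.mono_right hE hm (by omega) (by omega))
  · obtain ⟨x, hx1, hx2, hxU⟩ :=
      U.exists_notMem_Icc_of_card_add_le (lo := a + 1) (hi := a + m - 1) (by omega)
    obtain ⟨u, hu, hux | hxu⟩ := heaten x (by omega) (by omega) hxU
    · have := add_le_of_triRel hm hux
      have := hnear u hu
      exact (hb u hu).1 (hab.anti_left hE hm (by omega) (by omega))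
    · exact (ha u hu).2 (hxu.anti_left hE hm (by omega) (by omega))
  · obtain ⟨x, hx1, hx2, hxU⟩ :=
      U.exists_notMem_Icc_of_card_add_le (lo := a + 1) (hi := b - 1) (by omega)
    obtain ⟨u, hu, hux | hxu⟩ := heaten x (by omega) (by omega) hxU
    · exact (hb u hu).1 (hux.mono_right hE hm (by omega) (by omega))
    · exact (ha u hu).2 (hxu.anti_left hE hm (by omega) (by omega))

end

/-- Assume `(1,r) ∈ E(G_r)`, the sparsity index is `m ≥ 2`, and `U` is an independent set
of `G_n` of size at most `m - 2`. Then for all `n ≥ 3r`, the complement of the induced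
subgraph `G_n \ N[U]` is connected. -/
theorem complement_minus_closed_neighborhood_connected (E : Set (ℕ × ℕ)) (r m n : ℕ)
    (hE : goodEdges E r) (h1r : (1, r) ∈ E)
    (hm : ∀ q ∈ E, q.1 + m ≤ q.2) (hattain : ∃ q ∈ E, q.2 = q.1 + m) (hm2 : 2 ≤ m)
    (hn : 3 * r ≤ n) (U : Finset ℕ) (hUsub : ↑U ⊆ Set.Icc 1 n)
    (hind : ∀ u ∈ U, ∀ v ∈ U, ¬ (chainGraph E r n).Adj u v)
    (hcard : U.card ≤ m - 2) :
    (((chainGraph E r n)ᶜ).induce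
      (Set.Icc 1 n \ {w | ∃ u ∈ U, w = u ∨ (chainGraph E r n).Adj u w})).Connected := by
  refine SimpleGraph.induce_connected_of_adj_consecutive
    (outsideClosedNbhd_nonempty hE h1r hm hattain hm2 hn hUsub hind hcard) ?_
  intro a ha b hb hab hno
  refine (SimpleGraph.compl_adj _ a b).mpr ⟨hab.ne, fun hadj => ?_⟩
  rcases ((SimpleGraph.fromRel_adj _ a b).mp hadj).2 with h | h
  · exact not_triRel_of_consecutive hE h1r hm hattain hm2 hn hUsub hind hcard ha hb hno h
  · have := add_le_of_triRel hm h
    omega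
end

section
/- Assume G_r has min edge-support index 1 and max edge-support index r (i.e., some edge contains 1 and some edge has endpoint r), the sparsity index equals 1 (some edge (v-1, v) ∈ E(G_r)), and hence there are edges (1, a), (v-1, v), (b, r) in G_r with 2 ≤ a, v ≤ r and 1 ≤ b ≤ r - 1. Then for all n ≥ 4r, every vertex k with 2r ≤ k ≤ n - 2r is adjacent in G_n to every other vertex of G_n; equivalently, U_n = {2r, 2r+1, ..., n-2r} consists of isolated vertices of the complement graph G_n^c. -/
/-!
A vertex `u` with `2r ≤ u ≤ n - 2r` is far from both ends of `{1,…,n}`. A partner `l` close to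
`u` is reached through the triangle of the consecutive edge `(v, v+1)`, which contains every
pair `k < l` with `v ≤ k` and `l ≤ n - r + v + 1`. A partner far above `u` is reached through the
triangle of `(b, r)`, and one near the left end through the triangle of `(1, a)`.
-/

theorem chainGraph_adj_of_triRel_s17 {E : Set (ℕ × ℕ)} {r n k l : ℕ} (hkl : k ≠ l)
    (h : triRel E r n k l) : (chainGraph E r n).Adj k l :=
  SimpleGraph.fromRel_adj _ _ _ |>.mpr ⟨hkl, Or.inl h⟩

theorem triRel_of_consecutive_mem {E : Set (ℕ × ℕ)} {r n v k l : ℕ} (hv : (v, v + 1) ∈ E)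
    (hvk : v ≤ k) (hkl : k < l) (hl : l + r ≤ n + v + 1) : triRel E r n k l :=
  ⟨(v, v + 1), hv, hvk, by omega, by omega⟩

section Middle

variable {E : Set (ℕ × ℕ)} {r a v b n u l : ℕ}

theorem triRel_middle_right (hE : goodEdges E r) (hv : (v, v + 1) ∈ E) (hb : (b, r) ∈ E)
    (hu : 2 * r ≤ u) (hun : u + 2 * r ≤ n) (hul : u < l) (hln : l ≤ n) :
    triRel E r n u l := by
  obtain ⟨-, -, hvr⟩ := hE _ hv
  obtain ⟨-, hbr, -⟩ := hE _ hb
  by_cases hfar : u + r ≤ l + b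
  · exact ⟨(b, r), hb, by omega, hfar, by omega⟩
  · exact triRel_of_consecutive_mem hv (by omega) hul (by omega)

theorem triRel_middle_left (hE : goodEdges E r) (ha : (1, a) ∈ E) (hv : (v, v + 1) ∈ E)
    (hu : 2 * r ≤ u) (hun : u + 2 * r ≤ n) (hl : 1 ≤ l) (hlu : l < u) :
    triRel E r n l u := by
  obtain ⟨-, -, har⟩ := hE _ ha
  obtain ⟨-, -, hvr⟩ := hE _ hv
  by_cases hnear : l ≤ r
  · exact ⟨(1, a), ha, hl, by omega, by omega⟩
  · exact triRel_of_consecutive_mem hv (by omega) hlu (by omega)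

end Middle

/-- Assume `G_r` has edges `(1,a)`, `(v,v+1)` (sparsity index 1) and `(b,r)`.
Then for all `n ≥ 4r`, every vertex `u` with `2r ≤ u ≤ n - 2r` is adjacent in `G_n`
to every other vertex of `{1,…,n}`; equivalently `U_n = {2r,…,n-2r}` consists of
isolated vertices of the complement graph `G_n^c`. -/
theorem middle_vertices_dominating (E : Set (ℕ × ℕ)) (r a v b : ℕ) (hE : goodEdges E r)
    (ha : (1, a) ∈ E) (hv : (v, v + 1) ∈ E) (hb : (b, r) ∈ E) :
    ∀ n, 4 * r ≤ n → ∀ u, 2 * r ≤ u → u ≤ n - 2 * r →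
      ∀ l ∈ Set.Icc 1 n, l ≠ u → (chainGraph E r n).Adj u l := by
  intro n _ u hu hun l ⟨hl, hln⟩ hlu
  replace hun : u + 2 * r ≤ n := by omega
  rcases hlu.lt_or_gt with hlu | hul
  · exact (chainGraph_adj_of_triRel_s17 hlu.ne (triRel_middle_left hE ha hv hu hun hl hlu)).symm
  · exact chainGraph_adj_of_triRel_s17 hul.ne (triRel_middle_right hE hv hb hu hun hul hln)
end
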